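/- arXiv:2207.01335 — 2 statements merged into one kernel-verified Lean document; each statement's English description precedes it below -/
import Mathlib

section
/- Let G be a finite group and let k be a field whose multiplicative group k* has order at least 2|G|. Then there exists a function f : G → k such that the Cayley evolution algebra Cay(f) is simple and Aut(Cay(f)) is isomorphic to G. -/
open scoped BigOperators

variable {k : Type*} [Field k] {G : Type*} [Group G] [Fintype G] [DecidableEq G]

/-- The Cayley evolution product on the group algebra `k[G]` (realized as `G → k`):
it is the `k`-bilinear product with `δ_g · δ_g = ∑ h, f (g⁻¹ * h) • δ_h` and
`δ_g · δ_{g'} = 0` for `g ≠ g'`. -/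
def cayMul (f : G → k) (x y : G → k) : G → k :=
  fun h => ∑ g : G, x g * y g * f (g⁻¹ * h)

/-- The automorphism group of the Cayley evolution algebra `Cay(f)`: the `k`-linear
bijections of `k[G]` preserving the Cayley evolution product. -/
def cayAut (f : G → k) : Subgroup ((G → k) ≃ₗ[k] (G → k)) where
  carrier := {φ | ∀ x y, φ (cayMul f x y) = cayMul f (φ x) (φ y)}
  one_mem' := fun _ _ => rfl
  mul_mem' := by
    intro a b ha hb x y
    replace ha : ∀ x y, a (cayMul f x y) = cayMul f (a x) (a y) := ha
    replace hb : ∀ x y, b (cayMul f x y) = cayMul f (b x) (b y) := hb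
    show a (b (cayMul f x y)) = cayMul f (a (b x)) (a (b y))
    rw [hb, ha]
  inv_mem' := by
    intro a ha x y
    replace ha : ∀ x y, a (cayMul f x y) = cayMul f (a x) (a y) := ha
    show a.symm (cayMul f x y) = cayMul f (a.symm x) (a.symm y)
    apply a.injective
    rw [ha, a.apply_symm_apply, a.apply_symm_apply, a.apply_symm_apply]

/-- `Cay(f)` is simple: the product is not identically zero and the only ideals
(`k`-subspaces `I` with `k[G] · I ⊆ I`) are `0` and `k[G]`. -/
def CaySimple (f : G → k) : Prop :=
  (∃ x y : G → k, cayMul f x y ≠ 0) ∧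
  ∀ I : Submodule k (G → k), (∀ x y : G → k, y ∈ I → cayMul f x y ∈ I) → I = ⊥ ∨ I = ⊤

/-- The structure matrix of `Cay(f)`: its `(h, g)` entry is `f (g⁻¹ * h)`. -/
def structMatrix (f : G → k) : Matrix G G k := Matrix.of fun h g => f (g⁻¹ * h)

open Function Matrix

/-! With the structure matrix `M = (f (g⁻¹ * h))`, the product is `x · y = M (x * y)`, where `x * y`
is the pointwise product. Left translations are always automorphisms. If `det M ≠ 0`, an
automorphism `φ` preserves the relation `x * y = 0`, so it maps each basis vector `δ_g` to some
`c_g δ_{σ g}`; comparing `φ (δ_g · δ_g)` with `φ δ_g · φ δ_g` coefficientwise forces `c_g = 1` and,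
for injective `f`, `σ g = σ 1 * g`, so `φ` is a left translation. If moreover `f` vanishes nowhere,
a nonzero ideal contains one column of `M`, then every column, hence everything. Such an `f`:
distinct units on `G ∖ {1}`, and for `f 1` a unit avoiding those `|G| - 1` values and the `|G|`
roots of `det M`, a monic polynomial of degree `|G|` in `f 1`. -/

theorem exists_injective_eq_single_of_pairwise_mul_eq_zero {α M : Type*} [Finite α]
    [DecidableEq α] [MulZeroClass M] [NoZeroDivisors M] {u : α → α → M} (hu : ∀ i, u i ≠ 0)
    (hdisj : Pairwise fun i j => u i * u j = 0) :
    ∃ σ : α → α, Injective σ ∧ ∀ i, u i = Pi.single (σ i) (u i (σ i)) := by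
  choose σ hσ using fun i => ne_iff.mp (hu i)
  have hσ_inj : Injective σ := by
    intro i j hij
    by_contra hne
    exact mul_ne_zero (hσ i) (hij ▸ hσ j) (congrFun (hdisj hne) (σ i))
  refine ⟨σ, hσ_inj, fun i => funext fun h => ?_⟩
  obtain ⟨j, rfl⟩ := Finite.injective_iff_surjective.mp hσ_inj h
  rcases eq_or_ne j i with rfl | hji
  · simp
  · rw [Pi.single_eq_of_ne (hσ_inj.ne hji)]
    exact (mul_eq_zero.mp (congrFun (hdisj hji.symm) (σ j))).resolve_right (hσ j)

theorem LinearMap.apply_eq_mul_of_map_single {R α β : Type*} [CommSemiring R] [Fintype α]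
    [DecidableEq α] [DecidableEq β] {φ : (α → R) →ₗ[R] (β → R)} {σ : α → β} (hσ : Injective σ)
    {c : α → R} (hφ : ∀ a, φ (Pi.single a 1) = Pi.single (σ a) (c a)) (x : α → R) (a : α) :
    φ x (σ a) = c a * x a := by
  have hφx : φ x = ∑ b, x b • Pi.single (σ b) (c b) := by
    conv_lhs => rw [← Finset.univ_sum_single x]
    simp only [map_sum, ← hφ, ← map_smul, ← Pi.single_smul, smul_eq_mul, mul_one]
  rw [hφx, Finset.sum_apply, Finset.sum_eq_single a (fun b _ hb => by simp [hσ.ne hb])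
    (by simp)]
  simp [mul_comm]

theorem exists_units_coe_notMem {K : Type*} [Monoid K] (S : Finset K)
    (hS : (S.card : Cardinal) < Cardinal.mk Kˣ) : ∃ x : Kˣ, (x : K) ∉ S := by
  contrapose! hS
  calc Cardinal.mk Kˣ ≤ Cardinal.mk S :=
        Cardinal.mk_le_of_injective (f := fun x => ⟨x, hS x⟩) fun _ _ h => Units.ext congr($h.1)
    _ = S.card := Cardinal.mk_coe_finset

theorem Function.Injective.update_of_forall_ne {α β : Type*} [DecidableEq α] {f : α → β}
    (hf : Injective f) {a : α} {b : β} (hb : ∀ t ≠ a, f t ≠ b) : Injective (update f a b) := by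
  intro s t hst
  by_cases hs : s = a <;> by_cases ht : t = a
  · rw [hs, ht]
  · rw [hs, update_self, update_of_ne ht] at hst
    exact absurd hst.symm (hb t ht)
  · rw [ht, update_self, update_of_ne hs] at hst
    exact absurd hst (hb s hs)
  · rw [update_of_ne hs, update_of_ne ht] at hst
    exact hf hst

omit [DecidableEq G] in
theorem cayMul_eq_mulVec (f : G → k) (x y : G → k) :
    cayMul f x y = structMatrix f *ᵥ (x * y) := by
  ext h
  simp only [cayMul, mulVec, dotProduct, structMatrix, of_apply, Pi.mul_apply, mul_comm]

theorem cayMul_eq_zero_iff {f : G → k} (hdet : (structMatrix f).det ≠ 0) {x y : G → k} :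
    cayMul f x y = 0 ↔ x * y = 0 := by
  have hinj : Injective (structMatrix f).mulVec :=
    mulVec_injective_iff_isUnit.mpr ((isUnit_iff_isUnit_det _).mpr hdet.isUnit)
  rw [cayMul_eq_mulVec, hinj.eq_iff' (mulVec_zero _)]

theorem cayMul_single_left (f : G → k) (g : G) (a : k) (y : G → k) :
    cayMul f (Pi.single g a) y = (a * y g) • (structMatrix f).col g := by
  ext h
  rw [cayMul, Finset.sum_eq_single g (fun b _ hb => by simp [hb]) (by simp)]
  simp [col, structMatrix]

theorem cayMul_single_self (f : G → k) (g : G) :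
    cayMul f (Pi.single g 1) (Pi.single g 1) = (structMatrix f).col g := by
  simp [cayMul_single_left]

theorem caySimple_of_det_ne_zero {f : G → k} (hf : ∀ t, f t ≠ 0)
    (hdet : (structMatrix f).det ≠ 0) : CaySimple f := by
  refine ⟨⟨Pi.single 1 1, Pi.single 1 1, fun h => hf 1 ?_⟩, fun I hI => ?_⟩
  · simpa [col, structMatrix] using congrFun ((cayMul_single_self f 1).symm.trans h) 1
  refine or_iff_not_imp_left.mpr fun hI0 => ?_
  obtain ⟨y, hyI, hy0⟩ := (Submodule.ne_bot_iff I).mp hI0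
  obtain ⟨g, hg : y g ≠ 0⟩ := ne_iff.mp hy0
  have hcol_g : (structMatrix f).col g ∈ I := by
    simpa [cayMul_single_left, hg] using hI (Pi.single g (y g)⁻¹) y hyI
  have hcol : ∀ h, (structMatrix f).col h ∈ I := fun h => by
    simpa [cayMul_single_left, col, structMatrix, hf] using
      hI (Pi.single h ((structMatrix f).col g h)⁻¹) _ hcol_g
  have hspan : Submodule.span k (Set.range (structMatrix f).col) = ⊤ := by
    rw [← range_mulVecLin, LinearMap.range_eq_top]
    exact mulVec_surjective_iff_isUnit.mpr ((isUnit_iff_isUnit_det _).mpr hdet.isUnit)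
  rw [eq_top_iff, ← hspan, Submodule.span_le]
  exact Set.range_subset_iff.mpr hcol

def leftTranslate (a : G) : (G → k) ≃ₗ[k] (G → k) :=
  LinearEquiv.funCongrLeft k k (Equiv.mulLeft a⁻¹)

omit [Fintype G] [DecidableEq G] in
@[simp]
theorem leftTranslate_apply (a : G) (x : G → k) (h : G) : leftTranslate a x h = x (a⁻¹ * h) :=
  rfl

omit [Fintype G] in
theorem leftTranslate_single (a g : G) (c : k) :
    leftTranslate a (Pi.single g c) = Pi.single (a * g) c := by
  ext h
  simp [Pi.single_apply, inv_mul_eq_iff_eq_mul]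

omit [DecidableEq G] in
theorem leftTranslate_cayMul (f : G → k) (a : G) (x y : G → k) :
    leftTranslate a (cayMul f x y) = cayMul f (leftTranslate a x) (leftTranslate a y) := by
  ext h
  simp only [leftTranslate_apply, cayMul]
  exact Fintype.sum_equiv (Equiv.mulLeft a) _ _ fun g => by simp [mul_assoc]

def cayTranslate (f : G → k) : G →* cayAut f where
  toFun a := ⟨leftTranslate a, leftTranslate_cayMul f a⟩
  map_one' := by ext; simp
  map_mul' a b := by ext; simp [mul_assoc]

theorem cayTranslate_injective (f : G → k) : Injective (cayTranslate f) := fun a b hab => by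
  have := congr($hab.1 (Pi.single 1 1) a)
  simpa [cayTranslate, Pi.single_apply, inv_mul_eq_one, eq_comm] using this

theorem exists_map_single_eq_of_map_cayMul {f : G → k} (hdet : (structMatrix f).det ≠ 0)
    {φ : (G → k) ≃ₗ[k] (G → k)} (hφ : ∀ x y, φ (cayMul f x y) = cayMul f (φ x) (φ y)) :
    ∃ σ : G → G, Injective σ ∧ ∃ c : G → k, (∀ g, c g ≠ 0) ∧
      ∀ g, φ (Pi.single g 1) = Pi.single (σ g) (c g) := by
  have hu : ∀ g, φ (Pi.single g 1) ≠ 0 := fun g => φ.map_ne_zero_iff.mpr (by simp)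
  -- orthogonal basis vectors have orthogonal images, since `x · y = 0 ↔ x * y = 0`
  have hdisj : Pairwise fun g g' => φ (Pi.single g 1) * φ (Pi.single g' 1) = 0 :=
    fun g g' hne => by
      dsimp only
      rw [← cayMul_eq_zero_iff hdet, ← hφ, (cayMul_eq_zero_iff hdet).mpr, map_zero]
      ext h
      by_cases h = g <;> simp_all [Pi.single_apply]
  obtain ⟨σ, hσ, hφ_single⟩ := exists_injective_eq_single_of_pairwise_mul_eq_zero hu hdisj
  refine ⟨σ, hσ, _, fun g hg => hu g ?_, hφ_single⟩
  rw [hφ_single g, hg, Pi.single_zero]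

theorem exists_leftTranslate_eq_of_map_cayMul {f : G → k} (hinj : Injective f)
    (hf : ∀ t, f t ≠ 0) (hdet : (structMatrix f).det ≠ 0) {φ : (G → k) ≃ₗ[k] (G → k)}
    (hφ : ∀ x y, φ (cayMul f x y) = cayMul f (φ x) (φ y)) : ∃ a, leftTranslate a = φ := by
  obtain ⟨σ, hσ, c, hc, hφ_single⟩ := exists_map_single_eq_of_map_cayMul hdet hφ
  have hφ_apply : ∀ x a, φ x (σ a) = c a * x a :=
    LinearMap.apply_eq_mul_of_map_single (φ := φ.toLinearMap) hσ hφ_single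
  -- apply `φ` to `δ_g · δ_g = ∑ h, f (g⁻¹ * h) δ_h` and read off the coefficient of `δ_{σ h}`
  have key : ∀ g h, c h * f (g⁻¹ * h) = c g * c g * f ((σ g)⁻¹ * σ h) := fun g h => by
    simpa [cayMul_single_self, hφ_single, cayMul_single_left, hφ_apply, col, structMatrix]
      using congrFun (hφ (Pi.single g 1) (Pi.single g 1)) (σ h)
  have hc_one : ∀ g, c g = 1 := fun g => by
    have := mul_right_cancel₀ (hf 1) (by simpa using key g g : c g * f 1 = c g * c g * f 1)
    exact (mul_eq_left₀ (hc g)).mp this.symm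
  have hσ_mul : ∀ h, σ h = σ 1 * h := fun h =>
    (eq_inv_mul_iff_mul_eq.mp (hinj (by simpa [hc_one] using key 1 h))).symm
  refine ⟨σ 1, LinearEquiv.toLinearMap_injective (LinearMap.pi_ext' fun g => ?_)⟩
  ext : 1
  simp [leftTranslate_single, hφ_single, hc_one, hσ_mul g]

theorem cayTranslate_surjective {f : G → k} (hinj : Injective f) (hf : ∀ t, f t ≠ 0)
    (hdet : (structMatrix f).det ≠ 0) : Surjective (cayTranslate f) := fun ⟨_, hφ⟩ =>
  (exists_leftTranslate_eq_of_map_cayMul hinj hf hdet hφ).imp fun _ h => Subtype.ext h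

theorem det_structMatrix_update_one (f : G → k) (x : k) :
    (structMatrix (update f 1 x)).det = (-structMatrix (update f 1 0)).charpoly.eval x := by
  rw [eval_charpoly, sub_neg_eq_add]
  congr 1
  ext h g
  by_cases hgh : g = h
  · simp [structMatrix, hgh]
  · simp [structMatrix, update_apply, inv_mul_eq_one, hgh, diagonal_apply_ne _ (Ne.symm hgh)]

theorem exists_injective_det_structMatrix_ne_zero
    (hk : 2 * (Fintype.card G : Cardinal) ≤ Cardinal.mk kˣ) :
    ∃ f : G → k, Injective f ∧ (∀ t, f t ≠ 0) ∧ (structMatrix f).det ≠ 0 := by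
  classical
  set n := Fintype.card G
  have hn : 0 < n := Fintype.card_pos
  obtain ⟨e⟩ : Nonempty (G ↪ kˣ) := Cardinal.lift_mk_le'.mp <| by
    simpa using le_trans (le_mul_of_one_le_left zero_le one_le_two) hk
  set f₀ : G → k := fun t => e t
  set p := (-structMatrix (update f₀ 1 0)).charpoly
  set S := p.roots.toFinset ∪ (Finset.univ.erase 1).image f₀
  have hS : S.card < 2 * n := by
    have hp : p.roots.toFinset.card ≤ n :=
      (Multiset.toFinset_card_le _).trans ((p.card_roots').trans (charpoly_natDegree_eq_dim _).le)
    have hf₀ : ((Finset.univ.erase 1).image f₀).card ≤ n - 1 :=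
      Finset.card_image_le.trans (by simp [n])
    have : S.card ≤ _ + _ := Finset.card_union_le _ _
    omega
  obtain ⟨x, hx⟩ := exists_units_coe_notMem S (lt_of_lt_of_le (by exact_mod_cast hS) hk)
  simp only [S, Finset.mem_union, Multiset.mem_toFinset, Finset.mem_image, Finset.mem_erase,
    not_or, not_exists, not_and] at hx
  refine ⟨update f₀ 1 x, ?_, fun t => ?_, ?_⟩
  · exact (Units.val_injective.comp e.injective).update_of_forall_ne fun t ht =>
      hx.2 t ⟨ht, Finset.mem_univ t⟩
  · rcases eq_or_ne t 1 with rfl | ht <;> simp [*, f₀]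
  · rw [det_structMatrix_update_one]
    exact fun h => hx.1 ((Polynomial.mem_roots (Matrix.charpoly_monic _).ne_zero).mpr h)

theorem cayley_realization_general {G : Type*} [Group G] [Fintype G]
    {k : Type*} [Field k]
    (hk : 2 * (Fintype.card G : Cardinal) ≤ Cardinal.mk kˣ) :
    ∃ f : G → k, CaySimple f ∧ Nonempty (↥(cayAut f) ≃* G) := by
  classical
  obtain ⟨f, hinj, hf, hdet⟩ := exists_injective_det_structMatrix_ne_zero hk
  exact ⟨f, caySimple_of_det_ne_zero hf hdet, ⟨(MulEquiv.ofBijective (cayTranslate f)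
    ⟨cayTranslate_injective f, cayTranslate_surjective hinj hf hdet⟩).symm⟩⟩

/-- If `G` is a finite group and `k` a field with `|kˣ| ≥ 2|G|`, then there
is a function `f : G → k` such that the Cayley evolution algebra `Cay(f)` is simple and
`Aut(Cay(f)) ≅ G`. -/
theorem cayley_realization {G : Type*} [Group G] [Fintype G] [DecidableEq G]
    {k : Type*} [Field k]
    (hk : 2 * (Fintype.card G : Cardinal) ≤ Cardinal.mk kˣ) :
    ∃ f : G → k, CaySimple f ∧ Nonempty (↥(cayAut f) ≃* G) :=
  cayley_realization_general hk
end

section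
/- Let G be a finite group and k a field whose multiplicative group k* has order at least 2|G|. Then for every nonempty subset S ⊆ G there exists a function f : G → k such that (1) supp(f) = {g ∈ G : f(g) ≠ 0} equals S, (2) the restriction of f to S is injective, and (3) the Cayley evolution algebra Cay(f) is regular, i.e., its structure matrix — the G × G matrix with (h, g) entry f(g⁻¹h) — is invertible. -/
open scoped BigOperators

variable {k : Type*} [Field k] {G : Type*} [Group G] [Fintype G] [DecidableEq G]

/-! Embed `G` into `kˣ` and let `f` take pairwise distinct unit values on `S` and vanish off `S`.
Only the value `t = f s₀` at one point `s₀ ∈ S` remains free: the structure matrix is then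
`t • P + N` with `P` the permutation matrix of `g ↦ g * s₀⁻¹`, so its determinant is a polynomial
in `t` of degree at most `|G|` whose `t ^ |G|`-coefficient `det P = ±1` is nonzero. It has at most
`|G|` roots, and together with the `|G| - 1` other values of `f` they leave a unit free for `t`
among the at least `2|G|` units of `k`. -/

open Function

theorem Function.Injective.update {α β : Type*} [DecidableEq α] {v : α → β}
    (hv : Injective v) {a : α} {b : β} (hb : ∀ x ≠ a, v x ≠ b) :
    Injective (update v a b) := by
  intro x y hxy
  rcases eq_or_ne x a with rfl | hx <;> rcases eq_or_ne y x with rfl | hy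
  · rfl
  · rw [update_self, update_of_ne hy] at hxy
    exact (hb y hy hxy.symm).elim
  · rfl
  · rcases eq_or_ne y a with rfl | hya
    · rw [update_self, update_of_ne hx] at hxy
      exact (hb x hx hxy).elim
    · rw [update_of_ne hx, update_of_ne hya] at hxy
      exact hv hxy

theorem Set.indicator_update_of_mem {α β : Type*} [Zero β] [DecidableEq α] {s : Set α} {a : α}
    (ha : a ∈ s) (v : α → β) (b : β) :
    s.indicator (update v a b) = update (s.indicator v) a b := by
  ext x
  rcases eq_or_ne x a with rfl | hx
  · simp [ha]
  · by_cases hxs : x ∈ s <;> simp [hxs, update_of_ne hx]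

theorem Cardinal.nonempty_embedding_of_card_le {α β : Type*} [Fintype α]
    (h : (Fintype.card α : Cardinal) ≤ Cardinal.mk β) : Nonempty (α ↪ β) := by
  rw [← Cardinal.lift_mk_le', Cardinal.mk_fintype, Cardinal.lift_natCast]
  simpa using h

theorem Matrix.isUnit_det_permMatrix {n R : Type*} [Fintype n] [DecidableEq n] [CommRing R]
    (σ : Equiv.Perm n) : IsUnit (σ.permMatrix R).det := by
  rw [Matrix.det_permutation]
  exact (Equiv.Perm.sign σ).isUnit.map (Int.castRingHom R)

open Polynomial in
theorem Matrix.exists_finset_forall_det_smul_add_ne_zero {n R : Type*} [Fintype n]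
    [DecidableEq n] [CommRing R] [IsDomain R] (P N : Matrix n n R) (hP : P.det ≠ 0) :
    ∃ Z : Finset R, Z.card ≤ Fintype.card n ∧ ∀ t ∉ Z, (t • P + N).det ≠ 0 := by
  classical
  set p : R[X] := det ((X : R[X]) • P.map C + N.map C)
  have hp : p ≠ 0 := fun h => hP <| by
    rw [← coeff_det_X_add_C_card P N, ← coeff_zero (Fintype.card n)]
    exact congrArg (coeff · _) h
  have heval (t : R) : p.eval t = (t • P + N).det := by
    rw [← coe_evalRingHom, RingHom.map_det]
    congr 1
    ext i j
    simp only [RingHom.mapMatrix_apply, Matrix.map_apply, Matrix.add_apply, Matrix.smul_apply,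
      smul_eq_mul, map_add, coe_evalRingHom, eval_mul, eval_X, eval_C]
  refine ⟨p.roots.toFinset,
    (Multiset.toFinset_card_le _).trans ((card_roots' p).trans (natDegree_det_X_add_C_le P N)),
    fun t ht h => ht ?_⟩
  rw [Multiset.mem_toFinset, mem_roots hp, IsRoot, heval, h]

theorem structMatrix_update {R H : Type*} [Semiring R] [Group H] [DecidableEq H] (f : H → R)
    (s : H) (t : R) :
    structMatrix (update f s t) =
      t • (Equiv.mulRight s⁻¹).permMatrix R + structMatrix (update f s 0) := by
  ext h g
  have hs : h * s⁻¹ = g ↔ g⁻¹ * h = s := by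
    rw [eq_comm, inv_mul_eq_iff_eq_mul, eq_mul_inv_iff_mul_eq, eq_comm]
  simp [structMatrix, Equiv.Perm.permMatrix, PEquiv.toMatrix_apply, hs, update_apply]
  split_ifs <;> simp

/-- If `|kˣ| ≥ 2|G|` then for every nonempty subset `S ⊆ G` there is a
function `f : G → k` with support exactly `S`, injective on `S`, such that `Cay(f)` is
regular (its structure matrix is invertible). -/
theorem exists_regular_function {G : Type*} [Group G] [Fintype G] [DecidableEq G]
    {k : Type*} [Field k]
    (hk : 2 * (Fintype.card G : Cardinal) ≤ Cardinal.mk kˣ)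
    (S : Set G) (hS : S.Nonempty) :
    ∃ f : G → k, {g : G | f g ≠ 0} = S ∧ Set.InjOn f S ∧ IsUnit (structMatrix f) := by
  classical
  obtain ⟨s₀, hs₀⟩ := hS
  obtain ⟨e⟩ : Nonempty (G ↪ kˣ) :=
    Cardinal.nonempty_embedding_of_card_le (le_trans (le_mul_of_one_le_left zero_le one_le_two) hk)
  obtain ⟨Z, hZ, hdet⟩ :=
    ((Equiv.mulRight s₀⁻¹).permMatrix k).exists_finset_forall_det_smul_add_ne_zero
      (structMatrix (update (S.indicator fun g => (e g : k)) s₀ 0))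
      (Matrix.isUnit_det_permMatrix _).ne_zero
  set B := (Finset.univ.erase s₀).map e ∪ Z.preimage Units.val Units.val_injective.injOn
  have hB : B.card < 2 * Fintype.card G := by
    have hG := Fintype.card_pos (α := G)
    calc B.card ≤ (Finset.univ.erase s₀).card + Z.card :=
          (Finset.card_union_le _ _).trans (add_le_add (Finset.card_map _).le
            (Finset.card_le_card_of_injOn Units.val (fun _ hu => Finset.mem_preimage.1 hu)
              Units.val_injective.injOn))
      _ < 2 * Fintype.card G := by
        rw [Finset.card_erase_of_mem (Finset.mem_univ _), Finset.card_univ]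
        omega
  obtain ⟨u, hu⟩ := Cardinal.exists_notMem_of_length_lt B.toList <| by
    rw [Finset.length_toList]
    exact (Nat.cast_lt.mpr hB).trans_le (by exact_mod_cast hk)
  have hu_ne (g : G) (hg : g ≠ s₀) : e g ≠ u := fun h => hu <| Finset.mem_toList.2 <|
    Finset.mem_union_left _ (h ▸ Finset.mem_map_of_mem e (by simpa using hg))
  have hu_det : (u : k) ∉ Z := fun h => hu <| Finset.mem_toList.2 <|
    Finset.mem_union_right _ (Finset.mem_preimage.2 h)
  have hw : Injective (update e s₀ u) := e.injective.update hu_ne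
  refine ⟨S.indicator (Units.val ∘ update e s₀ u), by ext; simp,
    (Units.val_injective.comp hw).injOn.congr fun g hg => (Set.indicator_of_mem hg _).symm, ?_⟩
  rw [comp_update, Set.indicator_update_of_mem hs₀, structMatrix_update,
    Matrix.isUnit_iff_isUnit_det, isUnit_iff_ne_zero]
  exact hdet _ hu_det
end
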